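/- For the card game SET parameters p = 3, r = 3 and n = 10 points in F_3^d with q = 3^d: the ratio F(2,10)/F(0,10) of the second moment to the count equals 120(q^2 + 89q − 540)/((q−5)(q−4)(q−2)), where F(m,n) = ∑_{|S|=n} a(S)^m and a(S) counts 3-subsets of S summing to zero. In particular F(2,10) vanishes at q = 1, 3, 9. -/

import Mathlib

open Finset

/-- `a(S)`: the number of `3`-element subsets of `S ⊆ 𝔽_3^d` summing to zero
(the number of "SETs" contained in `S`). -/
def aCount (p d r : ℕ) (S : Finset (Fin d → ZMod p)) : ℕ :=
  ((S.powersetCard r).filter fun T => ∑ x ∈ T, x = 0).card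

/-- The moment `F(m,n) = ∑_{|S|=n} a(S)^m` over subsets of `𝔽_p^d`. -/
def Fmom (p : ℕ) [NeZero p] (d r m n : ℕ) : ℕ :=
  ∑ S ∈ (Finset.univ : Finset (Fin d → ZMod p)).powersetCard n, (aCount p d r S) ^ m

/-! The sets counted by `a(S)` are the lines of `𝔽₃^d`, so `a(S)²` counts ordered pairs of lines
inside `S` and `F(2,n) = ∑_{(L₁,L₂)} C(q - |L₁ ∪ L₂|, n - |L₁ ∪ L₂|)`. Two distinct lines meet in
at most one point, so `|L₁ ∪ L₂|` is `3`, `5` or `6`. Every point lies on `(q-1)/2` lines, giving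
`q(q-1)/6` lines and, from `∑ₓ rₓ² = ∑ |L₁ ∩ L₂|`, `q(q-1)(q-3)/4` ordered pairs of meeting lines;
the ratio is then binomial arithmetic. -/

theorem Finset.sum_sq_card_filter {ι κ : Type*} (U : Finset ι) (B : Finset κ) (P : κ → ι → Prop)
    [∀ t s, Decidable (P t s)] :
    ∑ s ∈ U, #{t ∈ B | P t s} ^ 2 = ∑ t₁ ∈ B, ∑ t₂ ∈ B, #{s ∈ U | P t₁ s ∧ P t₂ s} := by
  simp only [sq, card_filter, sum_mul_sum, ite_zero_mul_ite_zero, mul_one]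
  rw [sum_comm]
  exact sum_congr rfl fun _ _ ↦ sum_comm

theorem Nat.cast_choose_sub_mul_descPochhammer_eval (q : ℕ) {n k : ℕ} (h : k ≤ n) :
    ((q - k).choose (n - k) : ℚ) * (descPochhammer ℚ k).eval (q : ℚ)
      = q.choose n * n.descFactorial k := by
  rw [descPochhammer_eval_eq_descFactorial, descFactorial_eq_factorial_mul_choose,
    descFactorial_eq_factorial_mul_choose]
  norm_cast
  rw [mul_left_comm (q.choose n), choose_mul h, mul_comm (q.choose k), mul_left_comm]

section Lines

variable {V : Type*} [AddCommGroup V] [Fintype V] [DecidableEq V]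

variable (V) in
def lines : Finset (Finset V) :=
  (univ.powersetCard 3).filter fun T ↦ ∑ x ∈ T, x = 0

theorem mem_lines {T : Finset V} : T ∈ lines V ↔ #T = 3 ∧ ∑ x ∈ T, x = 0 := by
  simp [lines, mem_powersetCard]

theorem neg_sub_mem_of_mem_lines {T : Finset V} (hT : T ∈ lines V) {a b : V} (ha : a ∈ T)
    (hb : b ∈ T) (hab : a ≠ b) : -a - b ∈ T := by
  obtain ⟨hcard, hsum⟩ := mem_lines.1 hT
  obtain ⟨x, y, z, hxy, hxz, hyz, rfl⟩ := card_eq_three.1 hcard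
  rw [sum_insert (by simp [hxy, hxz]), sum_insert (by simp [hyz]), sum_singleton] at hsum
  simp only [mem_insert, mem_singleton] at ha hb ⊢
  rcases ha with rfl | rfl | rfl <;> rcases hb with rfl | rfl | rfl <;> first
    | exact absurd rfl hab
    | (left; linear_combination (norm := module) -hsum)
    | (right; left; linear_combination (norm := module) -hsum)
    | (right; right; linear_combination (norm := module) -hsum)

variable (V) in
def intersectingLinePairs : Finset (Finset V × Finset V) :=
  (lines V).offDiag.filter fun p ↦ ¬Disjoint p.1 p.2

variable (V) in
def disjointLinePairs : Finset (Finset V × Finset V) :=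
  (lines V).offDiag.filter fun p ↦ Disjoint p.1 p.2

theorem card_intersectingLinePairs_add_card_disjointLinePairs :
    #(intersectingLinePairs V) + #(disjointLinePairs V) + #(lines V) = #(lines V) * #(lines V) := by
  rw [intersectingLinePairs, disjointLinePairs, add_comm #(filter _ _),
    card_filter_add_card_filter_not, offDiag_card]
  exact Nat.sub_add_cancel (Nat.le_mul_self _)

variable [Module (ZMod 3) V]

theorem insert_mem_lines {x y : V} (h : x ≠ y) : ({x, y, -x - y} : Finset V) ∈ lines V := by
  have three_smul (v : V) : (3 : ZMod 3) • v = 0 := by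
    rw [show (3 : ZMod 3) = 0 from rfl, zero_smul]
  have h1 : -x - y ≠ x := fun e ↦ h (by linear_combination (norm := module) e + three_smul x)
  have h2 : -x - y ≠ y := fun e ↦ h (by linear_combination (norm := module) -e - three_smul y)
  refine mem_lines.2 ⟨card_eq_three.2 ⟨x, y, _, h, h1.symm, h2.symm, rfl⟩, ?_⟩
  rw [sum_insert (by simp [h, h1.symm]), sum_insert (by simp [h2.symm]), sum_singleton]
  abel

theorem eq_of_mem_lines {T : Finset V} (hT : T ∈ lines V) {a b : V} (ha : a ∈ T) (hb : b ∈ T)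
    (hab : a ≠ b) : T = {a, b, -a - b} := by
  refine (eq_of_subset_of_card_le ?_ ?_).symm
  · simp [insert_subset_iff, ha, hb, neg_sub_mem_of_mem_lines hT ha hb hab]
  · rw [(mem_lines.1 hT).1, (mem_lines.1 (insert_mem_lines hab)).1]

theorem card_inter_le_one_of_mem_lines {T₁ T₂ : Finset V} (h₁ : T₁ ∈ lines V) (h₂ : T₂ ∈ lines V)
    (hne : T₁ ≠ T₂) : #(T₁ ∩ T₂) ≤ 1 := by
  by_contra! h
  obtain ⟨a, ha, b, hb, hab⟩ := one_lt_card.1 h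
  rw [mem_inter] at ha hb
  exact hne ((eq_of_mem_lines h₁ ha.1 hb.1 hab).trans (eq_of_mem_lines h₂ ha.2 hb.2 hab).symm)

theorem card_lines_mem_mul_two (x : V) : #{T ∈ lines V | x ∈ T} * 2 = Fintype.card V - 1 := by
  -- each `y ≠ x` lies on exactly one line through `x`, and each such line has two such points
  have key := card_mul_eq_card_mul (fun y T ↦ y ∈ T) (s := univ.erase x)
    (t := {T ∈ lines V | x ∈ T}) (m := 1) (n := 2) ?_ ?_
  · rwa [card_erase_of_mem (mem_univ x), card_univ, mul_one, eq_comm] at key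
  · intro y hy
    have hxy : x ≠ y := fun e ↦ (mem_erase.1 hy).1 e.symm
    refine card_eq_one.2 ⟨{x, y, -x - y}, eq_singleton_iff_unique_mem.2 ⟨?_, ?_⟩⟩
    · simp [bipartiteAbove, insert_mem_lines hxy]
    · simp only [bipartiteAbove, mem_filter]
      rintro T ⟨⟨hT, hxT⟩, hyT⟩
      exact eq_of_mem_lines hT hxT hyT hxy
  · intro T hT
    rw [mem_filter] at hT
    rw [bipartiteBelow, filter_erase, filter_mem_eq_inter, univ_inter, card_erase_of_mem hT.2,
      (mem_lines.1 hT.1).1]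

theorem card_lines_mul_six : #(lines V) * 6 = Fintype.card V * (Fintype.card V - 1) := by
  have hsum := sum_card (B := lines V) fun x ↦
    Nat.eq_of_mul_eq_mul_right two_pos
      ((card_lines_mem_mul_two x).trans (card_lines_mem_mul_two 0).symm)
  rw [sum_congr rfl fun T hT ↦ (mem_lines.1 hT).1, sum_const, smul_eq_mul] at hsum
  rw [← card_lines_mem_mul_two 0, ← mul_assoc, ← hsum]
  ring

theorem sum_lines_sum_lines_card_inter {M : Type*} [AddCommMonoid M] (g : ℕ → M) :
    ∑ T₁ ∈ lines V, ∑ T₂ ∈ lines V, g #(T₁ ∩ T₂) = #(lines V) • g 3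
      + #(intersectingLinePairs V) • g 1 + #(disjointLinePairs V) • g 0 := by
  rw [← sum_product' (f := fun T₁ T₂ ↦ g #(T₁ ∩ T₂)), ← diag_union_offDiag,
    sum_union (disjoint_diag_offDiag _),
    ← sum_filter_not_add_sum_filter (lines V).offDiag fun p ↦ Disjoint p.1 p.2, add_assoc]
  congr 1
  · rw [← diag_card, ← sum_const (g 3)]
    refine sum_congr rfl fun ⟨T₁, T₂⟩ hp ↦ ?_
    obtain ⟨hT, rfl : T₁ = T₂⟩ := mem_diag.1 hp
    rw [inter_self, (mem_lines.1 hT).1]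
  congr 1
  · rw [← sum_const (g 1)]
    refine sum_congr rfl fun p hp ↦ ?_
    simp only [intersectingLinePairs, mem_filter, mem_offDiag] at hp
    obtain ⟨⟨h₁, h₂, hne⟩, hp⟩ := hp
    rw [le_antisymm (card_inter_le_one_of_mem_lines h₁ h₂ hne)
      (not_disjoint_iff_nonempty_inter.1 hp).card_pos]
  · rw [← sum_const (g 0)]
    refine sum_congr rfl fun p hp ↦ ?_
    rw [disjoint_iff_inter_eq_empty.1 (mem_filter.1 hp).2, card_empty]

theorem card_intersectingLinePairs :
    (#(intersectingLinePairs V) + 3 * #(lines V)) * 4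
      = Fintype.card V * (Fintype.card V - 1) ^ 2 := by
  have hsq := sum_sq_card_filter univ (lines V) fun T x ↦ x ∈ T
  have hinter := sum_lines_sum_lines_card_inter (V := V) id
  simp only [filter_and, filter_mem_eq_inter, univ_inter] at hsq
  simp only [id, smul_eq_mul, mul_zero, add_zero, mul_one] at hinter
  rw [add_comm, mul_comm 3, ← hinter, ← hsq, sum_mul]
  have hpoint (x : V) : #{T ∈ lines V | x ∈ T} ^ 2 * 4 = (Fintype.card V - 1) ^ 2 := by
    rw [← card_lines_mem_mul_two x]; ring
  rw [sum_congr rfl fun x _ ↦ hpoint x, sum_const, card_univ, smul_eq_mul]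

theorem sum_sq_card_lines_subset {n : ℕ} (hn : 6 ≤ n) :
    ∑ S ∈ univ.powersetCard n, #{T ∈ lines V | T ⊆ S} ^ 2
      = #(lines V) * (Fintype.card V - 3).choose (n - 3)
        + #(intersectingLinePairs V) * (Fintype.card V - 5).choose (n - 5)
        + #(disjointLinePairs V) * (Fintype.card V - 6).choose (n - 6) := by
  have hterm : ∀ T₁ ∈ lines V, ∀ T₂ ∈ lines V, #{S ∈ univ.powersetCard n | T₁ ⊆ S ∧ T₂ ⊆ S}
      = (Fintype.card V - (6 - #(T₁ ∩ T₂))).choose (n - (6 - #(T₁ ∩ T₂))) := by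
    intro T₁ h₁ T₂ h₂
    have hunion : #(T₁ ∪ T₂) = 6 - #(T₁ ∩ T₂) := by
      have := card_union_add_card_inter T₁ T₂
      rw [(mem_lines.1 h₁).1, (mem_lines.1 h₂).1] at this
      omega
    simp only [← union_subset_iff]
    rw [← hunion, ← card_univ]
    exact card_filter_powersetCard_subset _ _ _ (subset_univ _) (by omega)
  rw [sum_sq_card_filter, sum_congr rfl fun T₁ h₁ ↦ sum_congr rfl (hterm T₁ h₁),
    sum_lines_sum_lines_card_inter (fun k ↦ (Fintype.card V - (6 - k)).choose (n - (6 - k)))]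
  simp only [smul_eq_mul]

theorem sum_sq_card_lines_subset_ten_div_choose (hq : 10 ≤ Fintype.card V) :
    ((∑ S ∈ univ.powersetCard 10, #{T ∈ lines V | T ⊆ S} ^ 2 : ℕ) : ℚ)
        / ((Fintype.card V).choose 10 : ℚ)
      = 120 * ((Fintype.card V : ℚ) ^ 2 + 89 * Fintype.card V - 540)
          / ((Fintype.card V - 5) * (Fintype.card V - 4) * (Fintype.card V - 2)) := by
  have hN := card_lines_mul_six (V := V)
  have hP := card_intersectingLinePairs (V := V)
  have hP0 := card_intersectingLinePairs_add_card_disjointLinePairs (V := V)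
  rw [sum_sq_card_lines_subset (by norm_num : 6 ≤ 10)]
  set q := Fintype.card V
  have c3 := q.cast_choose_sub_mul_descPochhammer_eval (by norm_num : 3 ≤ 10)
  have c5 := q.cast_choose_sub_mul_descPochhammer_eval (by norm_num : 5 ≤ 10)
  have c6 := q.cast_choose_sub_mul_descPochhammer_eval (by norm_num : 6 ≤ 10)
  simp only [descPochhammer_succ_eval, descPochhammer_zero, Polynomial.eval_one, one_mul]
    at c3 c5 c6
  norm_num [Nat.descFactorial] at c3 c5 c6
  have hq' : (10 : ℚ) ≤ q := by exact_mod_cast hq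
  have h0 : (q : ℚ) ≠ 0 := by positivity
  have h1 : (q : ℚ) - 1 ≠ 0 := by linarith
  have h2 : (q : ℚ) - 2 ≠ 0 := by linarith
  have h3 : (q : ℚ) - 3 ≠ 0 := by linarith
  have h4 : (q : ℚ) - 4 ≠ 0 := by linarith
  have h5 : (q : ℚ) - 5 ≠ 0 := by linarith
  have hC : (q.choose 10 : ℚ) ≠ 0 := by exact_mod_cast (Nat.choose_pos hq).ne'
  have eN : (#(lines V) : ℚ) = q * (q - 1) / 6 := by
    rw [eq_div_iff (by norm_num), ← Nat.cast_pred (by omega)]; exact_mod_cast hN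
  have eP : (#(intersectingLinePairs V) : ℚ) = q * (q - 1) ^ 2 / 4 - 3 * #(lines V) := by
    rw [eq_sub_iff_add_eq, eq_div_iff (by norm_num), ← Nat.cast_pred (by omega)]
    exact_mod_cast hP
  have eP0 : (#(disjointLinePairs V) : ℚ)
      = #(lines V) * #(lines V) - #(lines V) - #(intersectingLinePairs V) := by
    have h := congrArg (Nat.cast (R := ℚ)) hP0
    push_cast at h
    linear_combination h
  push_cast
  rw [eP0, eP, eN, eq_div_of_mul_eq (by simp [*]) c3, eq_div_of_mul_eq (by simp [*]) c5,
    eq_div_of_mul_eq (by simp [*]) c6]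
  field_simp
  ring

end Lines

theorem aCount_eq_card_lines_subset {p d : ℕ} [NeZero p] (S : Finset (Fin d → ZMod p)) :
    aCount p d 3 S = #{T ∈ lines (Fin d → ZMod p) | T ⊆ S} := by
  unfold aCount
  congr 1
  ext T
  simp only [mem_filter, mem_powersetCard, mem_lines]
  tauto

/-- For `p = 3`, `r = 3`, `n = 10` points in `𝔽_3^d` with `q = 3^d`:
`F(2,10)/F(0,10) = 120(q² + 89q − 540)/((q−5)(q−4)(q−2))` (for `d ≥ 3`, i.e. `q ≥ 27`),
and `F(2,10) = 0` for `d ∈ {0,1,2}` (`q = 1, 3, 9`), since there are then no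
`10`-element subsets. -/
theorem second_moment_SET_ten_points :
    (∀ d : ℕ, 3 ≤ d →
      (Fmom 3 d 3 2 10 : ℚ) / ((3 ^ d).choose 10 : ℚ)
        = 120 * (((3 : ℚ) ^ d) ^ 2 + 89 * (3 : ℚ) ^ d - 540)
            / (((3 : ℚ) ^ d - 5) * ((3 : ℚ) ^ d - 4) * ((3 : ℚ) ^ d - 2)))
    ∧ ∀ d : ℕ, d < 3 → Fmom 3 d 3 2 10 = 0 := by
  have hcard (d : ℕ) : Fintype.card (Fin d → ZMod 3) = 3 ^ d := by simp
  refine ⟨fun d hd ↦ ?_, fun d hd ↦ ?_⟩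
  · have h10 : 10 ≤ Fintype.card (Fin d → ZMod 3) := by
      rw [hcard]
      exact le_trans (by norm_num) (Nat.pow_le_pow_right three_pos hd)
    simpa only [Fmom, aCount_eq_card_lines_subset, hcard, Nat.cast_pow, Nat.cast_ofNat]
      using sum_sq_card_lines_subset_ten_div_choose h10
  · have hsmall : #(univ : Finset (Fin d → ZMod 3)) < 10 := by
      rw [card_univ, hcard]
      exact lt_of_le_of_lt (Nat.pow_le_pow_right three_pos (by omega)) (by norm_num : 3 ^ 2 < 10)
    rw [Fmom, powersetCard_eq_empty.2 hsmall, sum_empty]
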